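/- Let H, V be Hilbert spaces with V compactly embedded in H, and let ρⁿ : [0,T] → V be uniformly bounded in V, uniformly 1/2-Hölder continuous in H, and such that for each fixed time-average ρⁿ converges weakly in V to ρ; then ρⁿ(t) → ρ(t) strongly in H for every t ∈ (0,T). -/

import Mathlib

open MeasureTheory Filter Set Topology
open scoped RealInnerProductSpace ENNReal

/-! Fix `t`. Along `h → 0⁺`, the backward averages `⨍ s in (t - h, t], ρⁿ s` are `C √h`-close to
`ρⁿ t` in `H`, uniformly in `n`, because of the uniform Hölder bound. For each fixed `h` they are
bounded in `V` and converge weakly there, so the compact embedding makes them converge strongly in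
`H`. Exchanging the two limits (uniform convergence in `n`) gives `ρⁿ t → ρ t` in `H`. -/

theorem IsCompactOperator.tendsto_of_weak_tendsto {α V H : Type*}
    [NormedAddCommGroup V] [InnerProductSpace ℝ V] [CompleteSpace V]
    [NormedAddCommGroup H] [InnerProductSpace ℝ H] [CompleteSpace H]
    {ι : V →L[ℝ] H} (hι : IsCompactOperator ι) {l : Filter α} {x : α → V} {x₀ : V} {M : ℝ}
    (hbdd : ∀ᶠ a in l, ‖x a‖ ≤ M) (hweak : ∀ w : V, Tendsto (fun a => ⟪w, x a⟫) l (𝓝 ⟪w, x₀⟫)) :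
    Tendsto (fun a => ι (x a)) l (𝓝 (ι x₀)) := by
  refine (hι.isCompact_closure_image_closedBall M).tendsto_nhds_of_unique_mapClusterPt ?_
    fun y _ hy => ext_inner_left ℝ fun z => ?_
  · filter_upwards [hbdd] with a ha
    exact subset_closure (mem_image_of_mem ι (mem_closedBall_zero_iff.2 ha))
  · have hcluster : MapClusterPt ⟪z, y⟫ l (fun a => ⟪z, ι (x a)⟫) :=
      hy.continuousAt_comp (continuous_const.inner continuous_id).continuousAt
    have hlim : Tendsto (fun a => ⟪z, ι (x a)⟫) l (𝓝 ⟪z, ι x₀⟫) := by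
      simpa only [ContinuousLinearMap.adjoint_inner_left] using hweak (ι.adjoint z)
    exact eq_of_nhds_neBot (ClusterPt.mono hcluster hlim)

section Average

variable {α E F : Type*} [MeasurableSpace α] {μ : Measure α} {s : Set α} {f : α → E}
  {g : ℝ → E} {t h C : ℝ} [NormedAddCommGroup E] [NormedSpace ℝ E]

theorem setAverage_Ioc_sub_eq (hh : 0 ≤ h) :
    ⨍ s in Ioc (t - h) t, g s = h⁻¹ • ∫ s in Ioc (t - h) t, g s := by
  rw [setAverage_eq, Real.volume_real_Ioc_of_le (by linarith), sub_sub_cancel]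

variable [CompleteSpace E] [NormedAddCommGroup F] [NormedSpace ℝ F] [CompleteSpace F]

theorem ContinuousLinearMap.map_setAverage (L : E →L[ℝ] F) (hf : IntegrableOn f s μ) :
    L (⨍ x in s, f x ∂μ) = ⨍ x in s, L (f x) ∂μ := by
  rw [setAverage_eq, setAverage_eq, map_smul, L.integral_comp_comm hf]

theorem dist_setAverage_le {c : E} {B : ℝ} (hs : MeasurableSet s) (hμ₀ : μ s ≠ 0)
    (hμ : μ s ≠ ∞) (hf : IntegrableOn f s μ) (hB : ∀ x ∈ s, dist (f x) c ≤ B) :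
    dist (⨍ x in s, f x ∂μ) c ≤ B :=
  (convex_closedBall c B).set_average_mem Metric.isClosed_closedBall hμ₀ hμ
    (ae_restrict_of_forall_mem hs hB) hf

theorem norm_setAverage_le {B : ℝ} (hs : MeasurableSet s) (hμ₀ : μ s ≠ 0) (hμ : μ s ≠ ∞)
    (hf : IntegrableOn f s μ) (hB : ∀ x ∈ s, ‖f x‖ ≤ B) : ‖⨍ x in s, f x ∂μ‖ ≤ B := by
  simpa only [dist_zero_right] using
    dist_setAverage_le hs hμ₀ hμ hf fun x hx => (dist_zero_right (f x)).trans_le (hB x hx)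

theorem dist_setAverage_Ioc_le_of_holder (hh : 0 < h) (hg : IntegrableOn g (Ioc (t - h) t))
    (hholder : ∀ s ∈ Ioc (t - h) t, ‖g t - g s‖ ≤ C * √|t - s|) :
    dist (⨍ s in Ioc (t - h) t, g s) (g t) ≤ C * √h := by
  have hmid : t - h / 2 ∈ Ioc (t - h) t := ⟨by linarith, by linarith⟩
  have hC : 0 ≤ C := nonneg_of_mul_nonneg_left ((norm_nonneg _).trans (hholder _ hmid))
    (Real.sqrt_pos.2 (abs_pos.2 (by linarith : (0 : ℝ) < t - (t - h / 2)).ne'))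
  refine dist_setAverage_le measurableSet_Ioc (by simpa using hh) (by simp) hg fun s hs => ?_
  have hts : |t - s| ≤ h := by
    rw [abs_of_nonneg (sub_nonneg.2 hs.2)]
    linarith [hs.1]
  calc dist (g s) (g t) = ‖g t - g s‖ := dist_comm _ _ |>.trans (dist_eq_norm _ _)
    _ ≤ C * √|t - s| := hholder s hs
    _ ≤ C * √h := by gcongr

theorem ContinuousLinearMap.dist_map_setAverage_Ioc_le_of_holder (L : E →L[ℝ] F) (hh : 0 < h)
    (hg : IntegrableOn g (Ioc (t - h) t))
    (hholder : ∀ s ∈ Ioc (t - h) t, ‖L (g t) - L (g s)‖ ≤ C * √|t - s|) :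
    dist (L (⨍ s in Ioc (t - h) t, g s)) (L (g t)) ≤ C * √h := by
  rw [L.map_setAverage hg]
  exact dist_setAverage_Ioc_le_of_holder hh (L.integrable_comp hg) hholder

end Average

theorem Metric.tendstoUniformly_of_dist_le {β γ X : Type*} [PseudoMetricSpace X]
    {F : β → γ → X} {f : γ → X} {p : Filter β} {δ : β → ℝ} (hδ : Tendsto δ p (𝓝 0))
    (hdist : ∀ᶠ b in p, ∀ c, dist (f c) (F b c) ≤ δ b) : TendstoUniformly F f p :=
  Metric.tendstoUniformly_iff.2 fun _ hε =>
    (hdist.and (hδ.eventually (gt_mem_nhds hε))).mono fun _ h c => (h.1 c).trans_lt h.2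

theorem strong_H_convergence_from_averages_general
    {V H : Type*} [NormedAddCommGroup V] [InnerProductSpace ℝ V] [CompleteSpace V]
    [NormedAddCommGroup H] [InnerProductSpace ℝ H] [CompleteSpace H]
    (ι : V →L[ℝ] H) (hι : IsCompactOperator ι)
    (T : ℝ) (ρn : ℕ → ℝ → V) (ρ : ℝ → V)
    (M : ℝ) (hbdd : ∀ n, ∀ t ∈ Set.Ioo (0:ℝ) T, ‖ρn n t‖ ≤ M)
    (hintn : ∀ n, IntegrableOn (ρn n) (Set.Ioo 0 T))
    (hintρ : IntegrableOn ρ (Set.Ioo 0 T))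
    (C : ℝ)
    (hHolder : ∀ n, ∀ s ∈ Set.Ioo (0:ℝ) T, ∀ t ∈ Set.Ioo (0:ℝ) T,
      ‖ι (ρn n t) - ι (ρn n s)‖ ≤ C * Real.sqrt |t - s|)
    (hHolderρ : ∀ s ∈ Set.Ioo (0:ℝ) T, ∀ t ∈ Set.Ioo (0:ℝ) T,
      ‖ι (ρ t) - ι (ρ s)‖ ≤ C * Real.sqrt |t - s|)
    (havg : ∀ t ∈ Set.Ioo (0:ℝ) T, ∀ h : ℝ, 0 < h → h < t → ∀ w : V,
      Tendsto (fun n => inner (𝕜 := ℝ) w (h⁻¹ • ∫ s in Set.Ioc (t - h) t, ρn n s))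
        atTop (nhds (inner (𝕜 := ℝ) w (h⁻¹ • ∫ s in Set.Ioc (t - h) t, ρ s)))) :
    ∀ t ∈ Set.Ioo (0:ℝ) T,
      Tendsto (fun n => ι (ρn n t)) atTop (nhds (ι (ρ t))) := by
  intro t ht
  have hsub : ∀ h ∈ Ioo 0 t, Ioc (t - h) t ⊆ Ioo 0 T := fun h hh s hs =>
    ⟨by linarith [hs.1, hh.2], hs.2.trans_lt ht.2⟩
  have hsmall : ∀ᶠ h in 𝓝[>] (0 : ℝ), h ∈ Ioo 0 t := Ioo_mem_nhdsGT ht.1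
  have hδ : Tendsto (fun h => C * √h) (𝓝[>] 0) (𝓝 0) := by
    simpa using ((Real.continuous_sqrt.tendsto 0).const_mul C).mono_left nhdsWithin_le_nhds
  refine TendstoUniformly.tendsto_of_eventually_tendsto (p := 𝓝[>] 0)
    (F := fun h n => ι (⨍ s in Ioc (t - h) t, ρn n s))
    (L := fun h => ι (⨍ s in Ioc (t - h) t, ρ s)) ?_ ?_ ?_
  · refine Metric.tendstoUniformly_of_dist_le hδ ?_
    filter_upwards [hsmall] with h hh n
    rw [dist_comm]
    exact ι.dist_map_setAverage_Ioc_le_of_holder hh.1 ((hintn n).mono_set (hsub h hh))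
      fun s hs => hHolder n s (hsub h hh hs) t ht
  · filter_upwards [hsmall] with h hh
    refine hι.tendsto_of_weak_tendsto (Eventually.of_forall fun n =>
      norm_setAverage_le measurableSet_Ioc (by simpa using hh.1) (by simp)
        ((hintn n).mono_set (hsub h hh)) fun s hs => hbdd n s (hsub h hh hs)) fun w => ?_
    simpa only [setAverage_Ioc_sub_eq hh.1.le] using havg t ht h hh.1 hh.2 w
  · refine tendsto_iff_dist_tendsto_zero.2 (squeeze_zero' (.of_forall fun _ => dist_nonneg) ?_ hδ)
    filter_upwards [hsmall] with h hh
    exact ι.dist_map_setAverage_Ioc_le_of_holder hh.1 (hintρ.mono_set (hsub h hh))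
      fun s hs => hHolderρ s (hsub h hh hs) t ht

/-- Abstract core of Lemma 5.1: `V` compactly embedded in `H` via `ι`, `ρⁿ` uniformly
bounded in `V`, uniformly 1/2-Hölder in `H`, whose time averages converge weakly in `V`
to those of `ρ`; then `ρⁿ(t) → ρ(t)` strongly in `H` for each `t ∈ (0,T)`. -/
theorem strong_H_convergence_from_averages
    {V H : Type*} [NormedAddCommGroup V] [InnerProductSpace ℝ V] [CompleteSpace V]
    [NormedAddCommGroup H] [InnerProductSpace ℝ H] [CompleteSpace H]
    (ι : V →L[ℝ] H) (hι : IsCompactOperator ι)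
    (T : ℝ) (hT : 0 < T) (ρn : ℕ → ℝ → V) (ρ : ℝ → V)
    (M : ℝ) (hbdd : ∀ n, ∀ t ∈ Set.Ioo (0:ℝ) T, ‖ρn n t‖ ≤ M)
    (hintn : ∀ n, IntegrableOn (ρn n) (Set.Ioo 0 T))
    (hintρ : IntegrableOn ρ (Set.Ioo 0 T))
    (C : ℝ)
    (hHolder : ∀ n, ∀ s ∈ Set.Ioo (0:ℝ) T, ∀ t ∈ Set.Ioo (0:ℝ) T,
      ‖ι (ρn n t) - ι (ρn n s)‖ ≤ C * Real.sqrt |t - s|)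
    (hHolderρ : ∀ s ∈ Set.Ioo (0:ℝ) T, ∀ t ∈ Set.Ioo (0:ℝ) T,
      ‖ι (ρ t) - ι (ρ s)‖ ≤ C * Real.sqrt |t - s|)
    (havg : ∀ t ∈ Set.Ioo (0:ℝ) T, ∀ h : ℝ, 0 < h → h < t → ∀ w : V,
      Tendsto (fun n => inner (𝕜 := ℝ) w (h⁻¹ • ∫ s in Set.Ioc (t - h) t, ρn n s))
        atTop (nhds (inner (𝕜 := ℝ) w (h⁻¹ • ∫ s in Set.Ioc (t - h) t, ρ s)))) :
    ∀ t ∈ Set.Ioo (0:ℝ) T,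
      Tendsto (fun n => ι (ρn n t)) atTop (nhds (ι (ρ t))) :=
  strong_H_convergence_from_averages_general ι hι T ρn ρ M hbdd hintn hintρ C hHolder hHolderρ havg
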